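/- Let ξ be discrete with P(ξ = x_i) = p_i > 0, let F : L²(Ω, ℝ) → ℝ be law-invariant with lifting f on probability measures (F(ξ) = f(L_ξ)), and suppose F is Fréchet differentiable at ξ. Then for each i, the value g(x_i) of the Wasserstein derivative satisfies g(x_i) = lim_{ε→0} [f(Σ_{j≠i} p_j δ_{x_j} + p_i δ_{x_i+ε}) − f(Σ_j p_j δ_{x_j})] / (ε p_i), i.e., DF(ξ) equals this limit almost surely on {ξ = x_i}. -/

import Mathlib

open MeasureTheory Filter Topology
open scoped ENNReal

/-!
Shifting a measurable part `A` of the level set `{ξ = x i}` by `ε` changes the law of `ξ` only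
through `μ A`. By law invariance, the directional derivative `∫_A DF` along `1_A` therefore
depends only on `μ A`. On an atomless space this forces `DF` to be a.e. constant on the level set:
otherwise Sierpiński's theorem yields subsets of equal positive measure on either side of a value,
with different integrals. Taking `A` to be the whole level set identifies the constant with the
limit of the difference quotient of `f`.
-/

theorem ENNReal.exists_mem_forall_le_two_mul {S : Set ℝ≥0∞} (hne : S.Nonempty)
    (htop : sSup S ≠ ∞) : ∃ a ∈ S, ∀ b ∈ S, b ≤ 2 * a := by
  rcases eq_or_ne (sSup S) 0 with h0 | h0
  · obtain ⟨a, ha⟩ := hne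
    exact ⟨a, ha, fun b hb => by simp [(sSup_eq_bot.1 h0) b hb]⟩
  · obtain ⟨a, ha, hlt⟩ := exists_lt_of_lt_csSup hne (ENNReal.half_lt_self h0 htop)
    refine ⟨a, ha, fun b hb => (le_sSup hb).trans ?_⟩
    rw [← ENNReal.div_le_iff' two_ne_zero ENNReal.ofNat_ne_top]
    exact hlt.le

namespace MeasureTheory

variable {Ω : Type*} [MeasurableSpace Ω] {μ : Measure Ω}

theorem mul_measureReal_lt_setIntegral {g : Ω → ℝ} {A : Set Ω} {c : ℝ}
    (hA : MeasurableSet A) (hA0 : 0 < μ A) (hAfin : μ A ≠ ∞) (hg : IntegrableOn g A μ)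
    (hlt : ∀ ω ∈ A, c < g ω) :
    c * μ.real A < ∫ ω in A, g ω ∂μ := by
  have hpos : 0 ≤ᵐ[μ.restrict A] fun ω => g ω - c :=
    ae_restrict_of_forall_mem hA fun ω hω => (sub_pos.2 (hlt ω hω)).le
  have hsupp : Function.support (fun ω => g ω - c) ∩ A = A :=
    Set.inter_eq_right.2 fun ω hω => (sub_pos.2 (hlt ω hω)).ne'
  have := (setIntegral_pos_iff_support_of_nonneg_ae hpos
    (hg.sub (integrableOn_const hAfin))).2 (by rwa [hsupp])
  rw [integral_sub hg (integrableOn_const hAfin), setIntegral_const, smul_eq_mul] at this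
  linarith

namespace Measure

/-- Stronger than Mathlib's `NoAtoms`, which only asks singletons to be null. -/
def IsAtomless (μ : Measure Ω) : Prop :=
  ∀ s : Set Ω, MeasurableSet s → 0 < μ s → ∃ t ⊆ s, MeasurableSet t ∧ 0 < μ t ∧ μ t < μ s

theorem exists_subset_forall_le_two_mul [IsFiniteMeasure μ] (w : Set Ω) (b : ℝ≥0∞) :
    ∃ u ⊆ w, MeasurableSet u ∧ μ u ≤ b ∧
      ∀ v ⊆ w, MeasurableSet v → μ v ≤ b → μ v ≤ 2 * μ u := by
  let Q : Set (Set Ω) := {v | v ⊆ w ∧ MeasurableSet v ∧ μ v ≤ b}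
  have hne : (μ '' Q).Nonempty := ⟨_, ∅, ⟨Set.empty_subset _, .empty, by simp⟩, rfl⟩
  have htop : sSup (μ '' Q) ≠ ∞ := ne_top_of_le_ne_top (measure_ne_top μ Set.univ) <|
    sSup_le <| by rintro _ ⟨v, -, rfl⟩; exact measure_mono (Set.subset_univ v)
  obtain ⟨_, ⟨u, ⟨huw, hu, hub⟩, rfl⟩, hmax⟩ := ENNReal.exists_mem_forall_le_two_mul hne htop
  exact ⟨u, huw, hu, hub, fun v hvw hv hvb => hmax _ ⟨v, ⟨hvw, hv, hvb⟩, rfl⟩⟩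

namespace IsAtomless

theorem exists_subset_two_mul_measure_le (hμ : μ.IsAtomless) {s : Set Ω}
    (hs : MeasurableSet s) (h0 : 0 < μ s) : ∃ t ⊆ s, MeasurableSet t ∧ 0 < μ t ∧ 2 * μ t ≤ μ s := by
  obtain ⟨u, hus, hu, hu0, hlt⟩ := hμ s hs h0
  have hsplit : μ u + μ (s \ u) = μ s := by
    rw [measure_add_sdiff hu.nullMeasurableSet, Set.union_eq_right.2 hus]
  rcases le_total (μ u) (μ (s \ u)) with hle | hle
  · exact ⟨u, hus, hu, hu0, by rw [two_mul, ← hsplit]; gcongr⟩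
  · refine ⟨s \ u, Set.sdiff_subset, hs.diff hu, ?_, by rw [two_mul, ← hsplit]; gcongr⟩
    refine pos_iff_ne_zero.2 fun h => hlt.ne ?_
    rw [← hsplit, h, add_zero]

theorem exists_subset_measure_pos_lt [IsFiniteMeasure μ] (hμ : μ.IsAtomless) {s : Set Ω}
    (hs : MeasurableSet s) (h0 : 0 < μ s) {δ : ℝ≥0∞} (hδ : 0 < δ) :
    ∃ t ⊆ s, MeasurableSet t ∧ 0 < μ t ∧ μ t < δ := by
  have hpow : ∀ n : ℕ, ∃ t ⊆ s, MeasurableSet t ∧ 0 < μ t ∧ 2 ^ n * μ t ≤ μ s := by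
    intro n
    induction n with
    | zero => exact ⟨s, subset_rfl, hs, h0, by simp⟩
    | succ n ih =>
      obtain ⟨t, hts, ht, ht0, htle⟩ := ih
      obtain ⟨u, hut, hu, hu0, hule⟩ := hμ.exists_subset_two_mul_measure_le ht ht0
      refine ⟨u, hut.trans hts, hu, hu0, ?_⟩
      calc 2 ^ (n + 1) * μ u = 2 ^ n * (2 * μ u) := by ring
        _ ≤ 2 ^ n * μ t := by gcongr
        _ ≤ μ s := htle
  obtain ⟨n, hn⟩ := ENNReal.exists_nat_mul_gt hδ.ne' (measure_ne_top μ s)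
  obtain ⟨t, hts, ht, ht0, htle⟩ := hpow n
  refine ⟨t, hts, ht, ht0, ?_⟩
  have hn2 : (n : ℝ≥0∞) ≤ 2 ^ n := by exact_mod_cast n.lt_two_pow_self.le
  have : 2 ^ n * μ t < 2 ^ n * δ := htle.trans_lt (hn.trans_le (by gcongr))
  exact (ENNReal.mul_lt_mul_iff_right (by positivity) (by simp)).1 this

/-- Sierpiński's theorem. The subset is built greedily, each step adding at least half of the
largest set that still fits. -/
theorem exists_subset_measure_eq [IsFiniteMeasure μ] (hμ : μ.IsAtomless) {s : Set Ω}
    (hs : MeasurableSet s) {r : ℝ≥0∞} (hr : r ≤ μ s) : ∃ t ⊆ s, MeasurableSet t ∧ μ t = r := by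
  choose U hUs hU hUr hUmax using
    fun t => exists_subset_forall_le_two_mul (μ := μ) (s \ t) (r - μ t)
  let T : ℕ → Set Ω := fun n => Nat.rec ∅ (fun _ t => t ∪ U t) n
  have hT : ∀ n, MeasurableSet (T n) ∧ T n ⊆ s ∧ μ (T n) ≤ r := by
    intro n
    induction n with
    | zero => exact ⟨.empty, Set.empty_subset _, by simp [T]⟩
    | succ n ih =>
      refine ⟨ih.1.union (hU _), Set.union_subset ih.2.1 ((hUs _).trans Set.sdiff_subset), ?_⟩
      calc μ (T n ∪ U (T n)) ≤ μ (T n) + (r - μ (T n)) := (measure_union_le _ _).trans (by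
              gcongr; exact hUr _)
        _ = r := add_tsub_cancel_of_le ih.2.2
  have hTsucc : ∀ n, μ (T (n + 1)) = μ (T n) + μ (U (T n)) := fun n =>
    measure_union (Set.disjoint_of_subset_right (hUs _) Set.disjoint_sdiff_right) (hU _)
  have hmono : Monotone T := monotone_nat_of_le_succ fun n => Set.subset_union_left
  have hTm : MeasurableSet (⋃ n, T n) := .iUnion fun n => (hT n).1
  have hTs : (⋃ n, T n) ⊆ s := Set.iUnion_subset fun n => (hT n).2.1
  have hlim : μ (⋃ n, T n) ≤ r := by
    rw [hmono.directed_le.measure_iUnion]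
    exact iSup_le fun n => (hT n).2.2
  refine ⟨⋃ n, T n, hTs, hTm, hlim.antisymm (not_lt.1 fun hlt => ?_)⟩
  -- A set of positive measure still fits beside every `T n`, so each step adds half of it.
  have hgap : 0 < μ (s \ ⋃ n, T n) := by
    rw [measure_sdiff hTs hTm.nullMeasurableSet (measure_ne_top μ _)]
    exact tsub_pos_of_lt (hlt.trans_le hr)
  obtain ⟨u, hus, hu, hu0, hult⟩ :=
    hμ.exists_subset_measure_pos_lt (hs.diff hTm) hgap (tsub_pos_of_lt hlt)
  have hgrow : ∀ n : ℕ, n * μ u ≤ 2 * μ (T n) := by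
    intro n
    induction n with
    | zero => simp
    | succ n ih =>
      rw [hTsucc, mul_add, Nat.cast_succ, add_mul, one_mul]
      refine add_le_add ih (hUmax _ u (hus.trans (Set.sdiff_subset_sdiff_right
        (Set.subset_iUnion T n))) hu (hult.le.trans ?_))
      exact tsub_le_tsub_left (measure_mono (Set.subset_iUnion T n)) r
  obtain ⟨n, hn⟩ := ENNReal.exists_nat_mul_gt hu0.ne' (b := 2 * r)
    (ENNReal.mul_ne_top ENNReal.ofNat_ne_top (ne_top_of_le_ne_top (measure_ne_top μ s) hr))
  exact (hn.trans_le (hgrow n)).not_ge (by gcongr; exact (hT n).2.2)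

theorem ae_le_or_ae_ge_of_setIntegral_eq [IsFiniteMeasure μ] (hμ : μ.IsAtomless) {g : Ω → ℝ}
    (hgm : Measurable g) (hg : Integrable g μ) {S : Set Ω} (hS : MeasurableSet S)
    (h : ∀ A B, MeasurableSet A → MeasurableSet B → A ⊆ S → B ⊆ S → μ A = μ B →
      ∫ ω in A, g ω ∂μ = ∫ ω in B, g ω ∂μ) (c : ℝ) :
    (∀ᵐ ω ∂μ.restrict S, g ω ≤ c) ∨ ∀ᵐ ω ∂μ.restrict S, c ≤ g ω := by
  simp only [ae_iff, not_le, Measure.restrict_apply (measurableSet_lt measurable_const hgm),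
    Measure.restrict_apply (measurableSet_lt hgm measurable_const)]
  by_contra! hpos
  obtain ⟨hA0, hB0⟩ := hpos
  have hAm : MeasurableSet ({ω | c < g ω} ∩ S) :=
    (measurableSet_lt measurable_const hgm).inter hS
  have hBm : MeasurableSet ({ω | g ω < c} ∩ S) :=
    (measurableSet_lt hgm measurable_const).inter hS
  -- Subsets of equal positive measure on either side of `c` would carry different integrals.
  obtain ⟨A, hAsub, hA, hAr⟩ := hμ.exists_subset_measure_eq hAm (min_le_left _ _)
  obtain ⟨B, hBsub, hB, hBr⟩ := hμ.exists_subset_measure_eq hBm (min_le_right _ _)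
  have hr : 0 < min (μ ({ω | c < g ω} ∩ S)) (μ ({ω | g ω < c} ∩ S)) :=
    lt_min (pos_iff_ne_zero.2 hA0) (pos_iff_ne_zero.2 hB0)
  have hlow := mul_measureReal_lt_setIntegral hA (hAr ▸ hr) (measure_ne_top μ A)
    hg.integrableOn fun ω hω => (hAsub hω).1
  have hhigh := mul_measureReal_lt_setIntegral (g := fun ω => -g ω) (c := -c) hB (hBr ▸ hr)
    (measure_ne_top μ B) hg.neg.integrableOn fun ω hω => neg_lt_neg (hBsub hω).1
  rw [integral_neg, measureReal_def, hBr, ← hAr, ← measureReal_def,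
    ← h A B hA hB (hAsub.trans Set.inter_subset_right) (hBsub.trans Set.inter_subset_right)
      (hAr.trans hBr.symm)] at hhigh
  linarith

theorem ae_eq_setAverage_of_setIntegral_eq [IsFiniteMeasure μ] (hμ : μ.IsAtomless) {g : Ω → ℝ}
    (hg : Integrable g μ) {S : Set Ω} (hS : MeasurableSet S)
    (h : ∀ A B, MeasurableSet A → MeasurableSet B → A ⊆ S → B ⊆ S → μ A = μ B →
      ∫ ω in A, g ω ∂μ = ∫ ω in B, g ω ∂μ) :
    ∀ᵐ ω ∂μ.restrict S, g ω = ⨍ ω in S, g ω ∂μ := by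
  set g' := hg.aestronglyMeasurable.mk g
  have hgg' : g =ᵐ[μ] g' := hg.aestronglyMeasurable.ae_eq_mk
  have hg' : Integrable g' μ := hg.congr hgg'
  have hint : ∀ A, ∫ ω in A, g ω ∂μ = ∫ ω in A, g' ω ∂μ := fun A =>
    integral_congr_ae (ae_restrict_of_ae hgg')
  set L := ⨍ ω in S, g' ω ∂μ
  have hL : ∫ ω in S, g' ω ∂μ = ∫ _ in S, L ∂μ := (integral_average _ _).symm
  have hconst : ∀ᵐ ω ∂μ.restrict S, g' ω = L := by
    have hg'm : Measurable g' := hg.aestronglyMeasurable.stronglyMeasurable_mk.measurable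
    rcases hμ.ae_le_or_ae_ge_of_setIntegral_eq hg'm hg' hS
      (fun A B hA hB hAS hBS hAB => by rw [← hint, ← hint, h A B hA hB hAS hBS hAB]) L
      with hle | hge
    · exact (integral_eq_iff_of_ae_le hg'.restrict (integrable_const L) hle).1 hL
    · exact ((integral_eq_iff_of_ae_le (integrable_const L) hg'.restrict hge).1 hL.symm).symm
  rw [average_congr (ae_restrict_of_ae hgg')]
  filter_upwards [ae_restrict_of_ae hgg', hconst] with ω hω hω'
  rw [hω, hω']

end IsAtomless

theorem map_restrict_eq_smul_dirac {α : Type*} [MeasurableSpace α] {ζ : Ω → α} {s : Set Ω}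
    (hs : MeasurableSet s) {a : α} (h : ∀ ω ∈ s, ζ ω = a) :
    (μ.restrict s).map ζ = μ s • dirac a := by
  rw [map_congr (ae_restrict_of_forall_mem hs h), map_const, restrict_apply_univ]

theorem map_eq_sum_smul_dirac {ι α : Type*} [Countable ι] [MeasurableSpace α]
    [MeasurableSingletonClass α] {ζ : Ω → α} (hζ : Measurable ζ) {y : ι → α}
    (hy : Function.Injective y) (h : ∀ᵐ ω ∂μ, ∃ j, ζ ω = y j) :
    μ.map ζ = sum fun j => μ {ω | ζ ω = y j} • dirac (y j) := by
  have hmeas : ∀ j, MeasurableSet {ω | ζ ω = y j} := fun j =>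
    hζ (measurableSet_singleton (y j))
  have hdisj : Pairwise (Function.onFun Disjoint fun j => {ω | ζ ω = y j}) := fun j k hjk =>
    Set.disjoint_left.2 fun ω h₁ h₂ => hjk (hy (h₁.symm.trans h₂))
  have hcover : μ.restrict (⋃ j, {ω | ζ ω = y j}) = μ :=
    restrict_eq_self_of_ae_mem (h.mono fun ω ⟨j, hj⟩ => Set.mem_iUnion.2 ⟨j, hj⟩)
  conv_lhs => rw [← hcover, restrict_iUnion hdisj hmeas, map_sum hζ.aemeasurable]
  exact congrArg sum (funext fun j => map_restrict_eq_smul_dirac (hmeas j) fun ω hω => hω)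

theorem map_add_smul_indicator {ξ : Ω → ℝ} (hξ : Measurable ξ) {c ε : ℝ} {A : Set Ω}
    (hA : MeasurableSet A) (hAS : A ⊆ {ω | ξ ω = c}) :
    μ.map (ξ + ε • A.indicator fun _ => 1) = (μ.restrict {ω | ξ ω = c}ᶜ).map ξ +
      μ ({ω | ξ ω = c} \ A) • dirac c + μ A • dirac (c + ε) := by
  set S := {ω | ξ ω = c}
  have hS : MeasurableSet S := measurableSet_eq_fun hξ measurable_const
  have hsplit : μ = μ.restrict Sᶜ + μ.restrict (S \ A) + μ.restrict A := by
    rw [add_assoc, ← restrict_union Set.disjoint_sdiff_left hA, Set.sdiff_union_of_subset hAS,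
      add_comm, restrict_add_restrict_compl hS]
  have hζ : Measurable (ξ + ε • A.indicator fun _ => 1) :=
    hξ.add ((measurable_const.indicator hA).const_smul ε)
  conv_lhs => rw [hsplit, Measure.map_add _ _ hζ, Measure.map_add _ _ hζ]
  congr 2
  · refine map_congr (ae_restrict_of_forall_mem hS.compl fun ω hω => ?_)
    simp [Set.indicator_of_notMem (fun h => hω (hAS h))]
  · exact map_restrict_eq_smul_dirac (hS.diff hA) fun ω hω => by
      simp [Set.indicator_of_notMem hω.2, hω.1.out]
  · exact map_restrict_eq_smul_dirac hA fun ω hω => by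
      simp [Set.indicator_of_mem hω, (hAS hω).out]

theorem map_add_smul_indicator_eq_sum {ι : Type*} [Countable ι] [DecidableEq ι] {ξ : Ω → ℝ}
    (hξ : Measurable ξ) {x : ι → ℝ} (hx : Function.Injective x)
    (h : ∀ᵐ ω ∂μ, ∃ j, ξ ω = x j) (i : ι) (ε : ℝ) :
    μ.map (ξ + ε • {ω | ξ ω = x i}.indicator fun _ => 1) =
      sum (fun j => if j = i then 0 else μ {ω | ξ ω = x j} • dirac (x j)) +
        μ {ω | ξ ω = x i} • dirac (x i + ε) := by
  have hS : MeasurableSet {ω | ξ ω = x i} := measurableSet_eq_fun hξ measurable_const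
  rw [map_add_smul_indicator hξ hS subset_rfl, Set.sdiff_self,
    measure_empty, zero_smul, add_zero, map_eq_sum_smul_dirac hξ hx (ae_restrict_of_ae h)]
  congr 2 with j : 1
  rw [restrict_apply (measurableSet_eq_fun hξ measurable_const)]
  split_ifs with hji
  · simp [hji]
  · have hsub : {ω | ξ ω = x j} ⊆ {ω | ξ ω = x i}ᶜ := fun ω hj hi =>
      hji (hx (hj.symm.trans hi))
    rw [Set.inter_eq_left.2 hsub]

end Measure

theorem MemLp.add_smul_indicator [IsFiniteMeasure μ] {p : ℝ≥0∞} {ξ : Ω → ℝ}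
    (hξ : MemLp ξ p μ) {A : Set Ω} (hA : MeasurableSet A) (ε : ℝ) :
    MemLp (ξ + ε • A.indicator fun _ => 1) p μ :=
  hξ.add ((memLp_indicator_const p hA (1 : ℝ) (.inr (measure_ne_top μ A))).const_smul ε)

def HasGateauxGradientAt (μ : Measure Ω) (F : (Ω → ℝ) → ℝ) (ξ DF : Ω → ℝ) : Prop :=
  ∀ η : Ω → ℝ, MemLp η 2 μ →
    Tendsto (fun ε : ℝ => (F (ξ + ε • η) - F ξ) / ε) (𝓝[≠] 0) (𝓝 (∫ ω, DF ω * η ω ∂μ))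

namespace HasGateauxGradientAt

variable [IsFiniteMeasure μ] {F : (Ω → ℝ) → ℝ} {ξ DF : Ω → ℝ}

theorem tendsto_indicator (hD : HasGateauxGradientAt μ F ξ DF) {A : Set Ω}
    (hA : MeasurableSet A) :
    Tendsto (fun ε : ℝ => (F (ξ + ε • A.indicator fun _ => 1) - F ξ) / ε) (𝓝[≠] 0)
      (𝓝 (∫ ω in A, DF ω ∂μ)) := by
  have := hD _ (memLp_indicator_const 2 hA (1 : ℝ) (.inr (measure_ne_top μ A)))
  simp_rw [← Set.indicator_mul_right, mul_one, integral_indicator hA] at this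
  exact this

/-- Moving equal masses of the atom `c` by `ε` gives equal laws, hence equal values of `F`. -/
theorem setIntegral_eq_of_measure_eq (hD : HasGateauxGradientAt μ F ξ DF) {f : Measure ℝ → ℝ}
    (hlift : ∀ ζ : Ω → ℝ, MemLp ζ 2 μ → F ζ = f (μ.map ζ)) (hξ : MemLp ξ 2 μ)
    (hξm : Measurable ξ) {c : ℝ} {A B : Set Ω} (hA : MeasurableSet A) (hB : MeasurableSet B)
    (hAS : A ⊆ {ω | ξ ω = c}) (hBS : B ⊆ {ω | ξ ω = c}) (hAB : μ A = μ B) :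
    ∫ ω in A, DF ω ∂μ = ∫ ω in B, DF ω ∂μ := by
  have hF : ∀ ε : ℝ,
      F (ξ + ε • A.indicator fun _ => 1) = F (ξ + ε • B.indicator fun _ => 1) := by
    intro ε
    rw [hlift _ (hξ.add_smul_indicator hA ε), hlift _ (hξ.add_smul_indicator hB ε),
      Measure.map_add_smul_indicator hξm hA hAS, Measure.map_add_smul_indicator hξm hB hBS,
      measure_sdiff hAS hA.nullMeasurableSet (measure_ne_top μ A),
      measure_sdiff hBS hB.nullMeasurableSet (measure_ne_top μ B), hAB]
  refine tendsto_nhds_unique (hD.tendsto_indicator hA) ?_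
  simpa only [hF] using hD.tendsto_indicator hB

end HasGateauxGradientAt

end MeasureTheory

theorem wasserstein_derivative_discrete_formula_general
    {Ω : Type*} [MeasurableSpace Ω] (μ : Measure Ω) [IsProbabilityMeasure μ]
    (hatomless : ∀ s : Set Ω, MeasurableSet s → 0 < μ s →
      ∃ t ⊆ s, MeasurableSet t ∧ 0 < μ t ∧ μ t < μ s)
    (ξ : Ω → ℝ) (hξ : MemLp ξ 2 μ) (hξm : Measurable ξ)
    (x : ℕ → ℝ) (hx : Function.Injective x)
    (p : ℕ → ℝ≥0∞) (hp : ∀ i, μ {ω | ξ ω = x i} = p i)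
    (hdiscrete : ∀ᵐ ω ∂μ, ∃ i, ξ ω = x i)
    (F : (Ω → ℝ) → ℝ) (f : Measure ℝ → ℝ)
    (hlift : ∀ ζ : Ω → ℝ, MemLp ζ 2 μ → F ζ = f (Measure.map ζ μ))
    (DFξ : Ω → ℝ) (hDFξ : MemLp DFξ 2 μ)
    (hdiff : ∀ η : Ω → ℝ, MemLp η 2 μ →
      Tendsto (fun ε : ℝ => (F (ξ + ε • η) - F ξ) / ε) (𝓝[≠] 0)
        (𝓝 (∫ ω, DFξ ω * η ω ∂μ))) :
    ∀ i : ℕ, ∃ L : ℝ,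
      Tendsto (fun ε : ℝ =>
          (f (Measure.sum (fun j : ℕ => if j = i then (0 : Measure ℝ)
                else p j • Measure.dirac (x j)) + p i • Measure.dirac (x i + ε))
            - f (Measure.sum fun j : ℕ => p j • Measure.dirac (x j)))
          / (ε * (p i).toReal)) (𝓝[≠] 0) (𝓝 L) ∧
      ∀ᵐ ω ∂μ, ξ ω = x i → DFξ ω = L := by
  intro i
  set S := {ω | ξ ω = x i}
  have hS : MeasurableSet S := measurableSet_eq_fun hξm measurable_const
  have hμ : μ.IsAtomless := hatomless
  have hD : HasGateauxGradientAt μ F ξ DFξ := hdiff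
  refine ⟨⨍ ω in S, DFξ ω ∂μ, ?_, (ae_restrict_iff' hS).1 ?_⟩
  · have hshift : ∀ ε : ℝ, f (Measure.sum (fun j : ℕ => if j = i then (0 : Measure ℝ)
        else p j • Measure.dirac (x j)) + p i • Measure.dirac (x i + ε)) =
          F (ξ + ε • S.indicator fun _ => 1) := fun ε => by
      rw [hlift _ (hξ.add_smul_indicator hS ε),
        Measure.map_add_smul_indicator_eq_sum hξm hx hdiscrete]
      simp only [hp]
    have hξlaw : f (Measure.sum fun j : ℕ => p j • Measure.dirac (x j)) = F ξ := by
      rw [hlift ξ hξ, Measure.map_eq_sum_smul_dirac hξm hx hdiscrete]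
      simp only [hp]
    rw [setAverage_eq, smul_eq_mul, measureReal_def, hp, inv_mul_eq_div]
    simpa only [hshift, hξlaw, div_div] using (hD.tendsto_indicator hS).div_const (p i).toReal
  · exact hμ.ae_eq_setAverage_of_setIntegral_eq (hDFξ.integrable one_le_two) hS
      fun A B hA hB hAS hBS hAB => hD.setIntegral_eq_of_measure_eq hlift hξ hξm hA hB hAS hBS hAB

/-- Formula for the Wasserstein derivative of a law-invariant `F` (with lifting `f` on
measures) at a discrete random variable: on each level set `{ξ = x i}`, the gradient equals
the limit of the finite-difference quotient of `f` obtained by shifting the atom at `x i`. -/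
theorem wasserstein_derivative_discrete_formula
    {Ω : Type*} [MeasurableSpace Ω] (μ : Measure Ω) [IsProbabilityMeasure μ]
    (hatomless : ∀ s : Set Ω, MeasurableSet s → 0 < μ s →
      ∃ t ⊆ s, MeasurableSet t ∧ 0 < μ t ∧ μ t < μ s)
    (ξ : Ω → ℝ) (hξ : MemLp ξ 2 μ) (hξm : Measurable ξ)
    (x : ℕ → ℝ) (hx : Function.Injective x)
    (p : ℕ → ℝ≥0∞) (hp : ∀ i, μ {ω | ξ ω = x i} = p i) (hppos : ∀ i, 0 < p i)
    (hdiscrete : ∀ᵐ ω ∂μ, ∃ i, ξ ω = x i)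
    (F : (Ω → ℝ) → ℝ) (f : Measure ℝ → ℝ)
    (hlift : ∀ ζ : Ω → ℝ, MemLp ζ 2 μ → F ζ = f (Measure.map ζ μ))
    (DFξ : Ω → ℝ) (hDFξ : MemLp DFξ 2 μ)
    (hdiff : ∀ η : Ω → ℝ, MemLp η 2 μ →
      Tendsto (fun ε : ℝ => (F (ξ + ε • η) - F ξ) / ε) (𝓝[≠] 0)
        (𝓝 (∫ ω, DFξ ω * η ω ∂μ))) :
    ∀ i : ℕ, ∃ L : ℝ,
      Tendsto (fun ε : ℝ =>
          (f (Measure.sum (fun j : ℕ => if j = i then (0 : Measure ℝ)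
                else p j • Measure.dirac (x j)) + p i • Measure.dirac (x i + ε))
            - f (Measure.sum fun j : ℕ => p j • Measure.dirac (x j)))
          / (ε * (p i).toReal)) (𝓝[≠] 0) (𝓝 L) ∧
      ∀ᵐ ω ∂μ, ξ ω = x i → DFξ ω = L :=
  wasserstein_derivative_discrete_formula_general μ hatomless ξ hξ hξm x hx p hp hdiscrete F f hlift
    DFξ hDFξ hdiff
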